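/- (Per-step mirror descent inequality.) Let A be a finite set, q a strictly positive probability distribution on A, λ, η > 0, Q : A → [0, r_max], and p_t ∈ Δ(A) strictly positive. Let p_{t+1} = argmin_{p∈Δ(A)} ⟨−Q, p⟩ + λ·KL(p‖q) + (1/η)·KL(p‖p_t). Then for every p* ∈ Δ(A): η·⟨Q, p* − p_t⟩ + ηλ·KL(p_t‖q) − ηλ·KL(p*‖q) ≤ (KL(p*‖p_t) − KL(p*‖p_{t+1})) + ηλ·(KL(p_t‖q) − KL(p_{t+1}‖q)) + η²·r_max²/2. -/

import Mathlib

/-! The objective is, up to an additive constant, `(λ + 1/η) · KL(p ‖ P)` for the Gibbs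
distribution `P ∝ exp ((Q + λ log q + η⁻¹ log pₜ) / (λ + 1/η))`. Hence its minimizer is
`p_{t+1} = P`, and at every `p*` the objective exceeds its minimum by exactly
`(λ + 1/η) · KL(p* ‖ p_{t+1})` (three-point identity). Multiplying by `η` and discarding
`ηλ · KL(p* ‖ p_{t+1}) ≥ 0` leaves `η ⟨Q, p_{t+1} - pₜ⟩ ≤ KL(p_{t+1} ‖ pₜ) + η² r_max² / 2`, which
holds coordinatewise: `3 (t - 1)² ≤ 2 (t + 2) (t log t - t + 1)` turns `b (x - y)` into at most
`x log (x/y) - x + y + b² (x + 2y) / 6` by AM-GM, and the weights `x + 2y` sum to `3`. -/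

open Finset

/-- The probability simplex over a finite set. -/
def probSimplex (A : Type*) [Fintype A] : Set (A → ℝ) :=
  {p | (∀ a, 0 ≤ p a) ∧ ∑ a, p a = 1}

/-- KL divergence between two distributions on a finite set. -/
noncomputable def KLdiv {A : Type*} [Fintype A] (p q : A → ℝ) : ℝ :=
  ∑ a, p a * Real.log (p a / q a)

/-- The regularized mirror-descent objective
`p ↦ ⟨−Q, p⟩ + λ·KL(p‖q) + (1/η)·KL(p‖pₜ)`. -/
noncomputable def mdObj {A : Type*} [Fintype A]
    (Q : A → ℝ) (q pt : A → ℝ) (lam eta : ℝ) (p : A → ℝ) : ℝ :=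
  (∑ a, -Q a * p a) + lam * KLdiv p q + (1 / eta) * KLdiv p pt

open Real InformationTheory

lemma monotoneOn_add_one_mul_log_sub :
    MonotoneOn (fun t => (t + 1) * log t - 2 * (t - 1)) (Set.Ioi 0) := by
  have hderiv : ∀ t > (0 : ℝ),
      HasDerivAt (fun t => (t + 1) * log t - 2 * (t - 1)) (log t + t⁻¹ - 1) t := fun t ht =>
    ((((hasDerivAt_id' t).add_const 1).mul (hasDerivAt_log (ne_of_gt ht))).sub
      (((hasDerivAt_id' t).sub_const 1).const_mul 2)).congr_deriv
      (by field_simp; ring)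
  refine monotoneOn_of_hasDerivWithinAt_nonneg (f' := fun t => log t + t⁻¹ - 1) (convex_Ioi 0)
    (fun t ht => (hderiv t ht).continuousAt.continuousWithinAt) ?_ ?_ <;> rw [interior_Ioi]
  · exact fun t ht => (hderiv t ht).hasDerivWithinAt
  · intro t ht
    linarith [one_sub_inv_le_log_of_pos ht]

lemma three_mul_sq_le_klFun {t : ℝ} (ht : 0 ≤ t) : 3 * (t - 1) ^ 2 ≤ 2 * (t + 2) * klFun t := by
  set G : ℝ → ℝ := fun t => (t + 1) * log t - 2 * (t - 1)
  set F : ℝ → ℝ := fun t => 2 * (t + 2) * klFun t - 3 * (t - 1) ^ 2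
  have hFcont : Continuous F := by fun_prop (disch := exact continuous_klFun)
  have hderiv : ∀ t ≠ (0 : ℝ), HasDerivAt F (4 * G t) t := fun t ht =>
    (((((hasDerivAt_id' t).add_const 2).const_mul 2).mul (hasDerivAt_klFun ht)).sub
      ((((hasDerivAt_id' t).sub_const 1).pow 2).const_mul 3)).congr_deriv
      (by simp only [G, klFun_apply]; ring)
  -- `F' = 4 G` has the sign of `t - 1`, so `F` is minimal at `t = 1`, where it vanishes.
  have hG : ∀ t > (0 : ℝ), 0 ≤ (t - 1) * G t := by
    intro t ht
    have h1 : G 1 = 0 := by simp [G]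
    rcases le_total t 1 with h | h
    · have := monotoneOn_add_one_mul_log_sub ht (show (1:ℝ) ∈ Set.Ioi 0 by simp) h
      nlinarith
    · have := monotoneOn_add_one_mul_log_sub (show (1:ℝ) ∈ Set.Ioi 0 by simp) ht h
      nlinarith
  suffices F 1 ≤ F t by simpa [F, klFun_one] using this
  rcases le_total t 1 with h | h
  · refine antitoneOn_of_hasDerivWithinAt_nonpos (f' := fun x => 4 * G x) (convex_Icc 0 1)
      hFcont.continuousOn ?_ ?_ ⟨ht, h⟩ ⟨zero_le_one, le_rfl⟩ h <;> rw [interior_Icc]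
    · exact fun x hx => (hderiv x hx.1.ne').hasDerivWithinAt
    · intro x hx; nlinarith [hG x hx.1, hx.2]
  · refine monotoneOn_of_hasDerivWithinAt_nonneg (f' := fun x => 4 * G x) (convex_Ici 1)
      hFcont.continuousOn ?_ ?_ (le_refl (1:ℝ)) h h <;> rw [interior_Ici]
    · exact fun x hx => (hderiv x (by linarith [hx.out])).hasDerivWithinAt
    · intro x hx; nlinarith [hG x (by linarith [hx.out]), hx.out]

lemma mul_klFun_div (x : ℝ) {y : ℝ} (hy : y ≠ 0) :
    y * klFun (x / y) = x * log (x / y) - x + y := by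
  rw [klFun_apply]; field_simp; ring

lemma mul_sub_le_mul_klFun_div_add (b : ℝ) {x y : ℝ} (hx : 0 ≤ x) (hy : 0 < y) :
    b * (x - y) ≤ y * klFun (x / y) + b ^ 2 * (x + 2 * y) / 6 := by
  obtain ⟨t, ht, rfl⟩ : ∃ t, 0 ≤ t ∧ x = t * y := ⟨x / y, by positivity, by field_simp⟩
  rw [mul_div_cancel_right₀ t hy.ne']
  have hsq : 3 * (t * y - y) ^ 2 ≤ 2 * (t * y + 2 * y) * (y * klFun t) :=
    calc 3 * (t * y - y) ^ 2 = y ^ 2 * (3 * (t - 1) ^ 2) := by ring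
      _ ≤ y ^ 2 * (2 * (t + 2) * klFun t) :=
        mul_le_mul_of_nonneg_left (three_mul_sq_le_klFun ht) (sq_nonneg y)
      _ = 2 * (t * y + 2 * y) * (y * klFun t) := by ring
  have key : 0 ≤ 6 * (t * y + 2 * y) *
      (y * klFun t + b ^ 2 * (t * y + 2 * y) / 6 - b * (t * y - y)) := by
    nlinarith [sq_nonneg (3 * (t * y - y) - b * (t * y + 2 * y))]
  exact sub_nonneg.mp ((mul_nonneg_iff_of_pos_left (by positivity)).mp key)

section KLdiv

variable {A : Type*} [Fintype A]

lemma nonempty_of_mem_probSimplex {p : A → ℝ} (hp : p ∈ probSimplex A) : Nonempty A :=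
  univ_nonempty_iff.mp (nonempty_of_sum_ne_zero (hp.2 ▸ one_ne_zero))

lemma KLdiv_self (p : A → ℝ) : KLdiv p p = 0 :=
  sum_eq_zero fun a _ => by
    rcases eq_or_ne (p a) 0 with h | h <;> simp [h]

lemma KLdiv_eq_sum_mul_log_sub (p : A → ℝ) {r : A → ℝ} (hr : ∀ a, r a ≠ 0) :
    KLdiv p r = ∑ a, p a * log (p a) - ∑ a, p a * log (r a) := by
  rw [KLdiv, ← sum_sub_distrib]
  refine sum_congr rfl fun a _ => ?_
  rcases eq_or_ne (p a) 0 with h | h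
  · simp [h]
  · rw [log_div h (hr a), mul_sub]

lemma KLdiv_eq_sum_mul_klFun {p r : A → ℝ} (hr : ∀ a, r a ≠ 0)
    (hsum : ∑ a, p a = ∑ a, r a) : KLdiv p r = ∑ a, r a * klFun (p a / r a) := by
  simp only [mul_klFun_div _ (hr _), sum_add_distrib, sum_sub_distrib, hsum, KLdiv]
  ring

lemma KLdiv_nonneg {p r : A → ℝ} (hp : p ∈ probSimplex A) (hr : r ∈ probSimplex A)
    (hrpos : ∀ a, 0 < r a) : 0 ≤ KLdiv p r := by
  rw [KLdiv_eq_sum_mul_klFun (fun a => (hrpos a).ne') (hp.2.trans hr.2.symm)]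
  exact sum_nonneg fun a _ => mul_nonneg (hr.1 a) (klFun_nonneg (div_nonneg (hp.1 a) (hr.1 a)))

lemma eq_of_KLdiv_nonpos {p r : A → ℝ} (hp : p ∈ probSimplex A) (hr : r ∈ probSimplex A)
    (hrpos : ∀ a, 0 < r a) (h : KLdiv p r ≤ 0) : p = r := by
  have hterm : ∀ a ∈ univ, 0 ≤ r a * klFun (p a / r a) := fun a _ =>
    mul_nonneg (hr.1 a) (klFun_nonneg (div_nonneg (hp.1 a) (hr.1 a)))
  rw [KLdiv_eq_sum_mul_klFun (fun a => (hrpos a).ne') (hp.2.trans hr.2.symm)] at h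
  have hzero := (sum_eq_zero_iff_of_nonneg hterm).mp (le_antisymm h (sum_nonneg hterm))
  funext a
  have hkl : klFun (p a / r a) = 0 :=
    (mul_eq_zero.mp (hzero a (mem_univ a))).resolve_left (hrpos a).ne'
  rw [klFun_eq_zero_iff (div_nonneg (hp.1 a) (hr.1 a)), div_eq_one_iff_eq (hrpos a).ne'] at hkl
  exact hkl

lemma sum_mul_sub_le_KLdiv_add {p r g : A → ℝ} {R : ℝ} (hp : p ∈ probSimplex A)
    (hr : r ∈ probSimplex A) (hrpos : ∀ a, 0 < r a) (hg : ∀ a, |g a| ≤ R) :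
    ∑ a, g a * (p a - r a) ≤ KLdiv p r + R ^ 2 / 2 := by
  have hterm : ∀ a ∈ univ, g a * (p a - r a) ≤
      r a * klFun (p a / r a) + R ^ 2 * (p a + 2 * r a) / 6 := fun a _ => by
    have hsq : g a ^ 2 ≤ R ^ 2 := sq_le_sq' (abs_le.mp (hg a)).1 (abs_le.mp (hg a)).2
    have := mul_sub_le_mul_klFun_div_add (g a) (hp.1 a) (hrpos a)
    have : 0 ≤ p a + 2 * r a := by linarith [hp.1 a, hr.1 a]
    nlinarith
  calc ∑ a, g a * (p a - r a)
      ≤ ∑ a, (r a * klFun (p a / r a) + R ^ 2 * (p a + 2 * r a) / 6) := sum_le_sum hterm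
    _ = KLdiv p r + R ^ 2 / 2 := by
      rw [KLdiv_eq_sum_mul_klFun (fun a => (hrpos a).ne') (hp.2.trans hr.2.symm),
        sum_add_distrib, ← sum_div, ← mul_sum, sum_add_distrib, ← mul_sum, hp.2, hr.2]
      ring

end KLdiv

section Softmax

variable {A : Type*} [Fintype A]

noncomputable def softmax (f : A → ℝ) (a : A) : ℝ :=
  exp (f a) / ∑ b, exp (f b)

variable [Nonempty A]

lemma sum_exp_pos (f : A → ℝ) : 0 < ∑ b, exp (f b) :=
  sum_pos (fun b _ => exp_pos (f b)) univ_nonempty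

lemma softmax_pos (f : A → ℝ) (a : A) : 0 < softmax f a :=
  div_pos (exp_pos _) (sum_exp_pos f)

lemma softmax_mem_probSimplex (f : A → ℝ) : softmax f ∈ probSimplex A :=
  ⟨fun a => (softmax_pos f a).le, by simp only [softmax, ← sum_div, div_self (sum_exp_pos f).ne']⟩

lemma log_softmax (f : A → ℝ) (a : A) : log (softmax f a) = f a - log (∑ b, exp (f b)) := by
  rw [softmax, log_div (exp_pos _).ne' (sum_exp_pos f).ne', log_exp]

lemma KLdiv_softmax {p : A → ℝ} (hp : ∑ a, p a = 1) (f : A → ℝ) :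
    KLdiv p (softmax f) = ∑ a, p a * log (p a) - ∑ a, p a * f a + log (∑ b, exp (f b)) := by
  simp only [KLdiv_eq_sum_mul_log_sub p fun a => (softmax_pos f a).ne', log_softmax, mul_sub,
    sum_sub_distrib, ← sum_mul, hp]
  ring

end Softmax

section MirrorDescent

variable {A : Type*} [Fintype A]

noncomputable def mdLogits (Q q pt : A → ℝ) (lam eta : ℝ) (a : A) : ℝ :=
  (Q a + lam * log (q a) + 1 / eta * log (pt a)) / (lam + 1 / eta)

lemma mdObj_eq_KLdiv_softmax [Nonempty A] {Q q pt p : A → ℝ} {lam eta : ℝ}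
    (hq : ∀ a, q a ≠ 0) (hpt : ∀ a, pt a ≠ 0) (hμ : lam + 1 / eta ≠ 0) (hp : ∑ a, p a = 1) :
    mdObj Q q pt lam eta p = (lam + 1 / eta) *
      (KLdiv p (softmax (mdLogits Q q pt lam eta)) -
        log (∑ b, exp (mdLogits Q q pt lam eta b))) := by
  have hlogits : (lam + 1 / eta) * ∑ a, p a * mdLogits Q q pt lam eta a =
      ∑ a, Q a * p a + lam * ∑ a, p a * log (q a) + 1 / eta * ∑ a, p a * log (pt a) := by
    simp only [mul_sum, ← sum_add_distrib]
    refine sum_congr rfl fun a _ => ?_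
    rw [mdLogits]; field_simp
  rw [KLdiv_softmax hp, mdObj, KLdiv_eq_sum_mul_log_sub p hq, KLdiv_eq_sum_mul_log_sub p hpt]
  simp only [neg_mul, sum_neg_distrib]
  linear_combination hlogits

lemma mul_mdObj (Q q pt : A → ℝ) (lam : ℝ) {eta : ℝ} (heta : eta ≠ 0) (p : A → ℝ) :
    eta * mdObj Q q pt lam eta p =
      eta * lam * KLdiv p q + KLdiv p pt - eta * ∑ a, Q a * p a := by
  simp only [mdObj, neg_mul, sum_neg_distrib]
  field_simp
  ring

variable [Nonempty A] {Q q pt pnext : A → ℝ} {lam eta : ℝ}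

lemma eq_softmax_of_isMinOn_mdObj (hq : ∀ a, q a ≠ 0) (hpt : ∀ a, pt a ≠ 0)
    (hμ : 0 < lam + 1 / eta) (hnext : pnext ∈ probSimplex A)
    (hmin : IsMinOn (mdObj Q q pt lam eta) (probSimplex A) pnext) :
    pnext = softmax (mdLogits Q q pt lam eta) := by
  have hP := softmax_mem_probSimplex (mdLogits Q q pt lam eta)
  refine eq_of_KLdiv_nonpos hnext hP (softmax_pos _) ?_
  have h := isMinOn_iff.mp hmin _ hP
  rw [mdObj_eq_KLdiv_softmax hq hpt hμ.ne' hnext.2, mdObj_eq_KLdiv_softmax hq hpt hμ.ne' hP.2,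
    KLdiv_self] at h
  nlinarith

lemma mdObj_eq_mdObj_add_KLdiv_of_isMinOn (hq : ∀ a, q a ≠ 0) (hpt : ∀ a, pt a ≠ 0)
    (hμ : 0 < lam + 1 / eta) (hnext : pnext ∈ probSimplex A)
    (hmin : IsMinOn (mdObj Q q pt lam eta) (probSimplex A) pnext)
    {p : A → ℝ} (hp : p ∈ probSimplex A) :
    mdObj Q q pt lam eta p = mdObj Q q pt lam eta pnext + (lam + 1 / eta) * KLdiv p pnext := by
  rw [mdObj_eq_KLdiv_softmax hq hpt hμ.ne' hp.2, mdObj_eq_KLdiv_softmax hq hpt hμ.ne' hnext.2,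
    ← eq_softmax_of_isMinOn_mdObj hq hpt hμ hnext hmin, KLdiv_self]
  ring

end MirrorDescent

theorem md_step_inequality_general {A : Type*} [Fintype A]
    (q : A → ℝ) (hqpos : ∀ a, 0 < q a)
    (lam eta rmax : ℝ) (hlam : 0 < lam) (heta : 0 < eta)
    (Q : A → ℝ) (hQ : ∀ a, Q a ∈ Set.Icc (0 : ℝ) rmax)
    (pt : A → ℝ) (hpt : pt ∈ probSimplex A) (hptpos : ∀ a, 0 < pt a)
    (pnext : A → ℝ)
    (hnext : pnext ∈ probSimplex A ∧
      ∀ p ∈ probSimplex A, mdObj Q q pt lam eta pnext ≤ mdObj Q q pt lam eta p) :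
    ∀ pstar ∈ probSimplex A,
      eta * (∑ a, Q a * (pstar a - pt a)) + eta * lam * KLdiv pt q
          - eta * lam * KLdiv pstar q
        ≤ (KLdiv pstar pt - KLdiv pstar pnext)
            + eta * lam * (KLdiv pt q - KLdiv pnext q)
            + eta ^ 2 * rmax ^ 2 / 2 := by
  intro pstar hpstar
  obtain ⟨hnext, hmin⟩ := hnext
  have : Nonempty A := nonempty_of_mem_probSimplex hpt
  have hq0 : ∀ a, q a ≠ 0 := fun a => (hqpos a).ne'
  have hpt0 : ∀ a, pt a ≠ 0 := fun a => (hptpos a).ne'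
  have hμ : 0 < lam + 1 / eta := by positivity
  replace hmin : IsMinOn (mdObj Q q pt lam eta) (probSimplex A) pnext := isMinOn_iff.mpr hmin
  have hthree_point := congrArg (eta * ·)
    (mdObj_eq_mdObj_add_KLdiv_of_isMinOn hq0 hpt0 hμ hnext hmin hpstar)
  have hscale : eta * (lam + 1 / eta) = eta * lam + 1 := by field_simp
  simp only [mul_mdObj Q q pt lam heta.ne', mul_add, ← mul_assoc, hscale] at hthree_point
  have hnextpos : ∀ a, 0 < pnext a := by
    rw [eq_softmax_of_isMinOn_mdObj hq0 hpt0 hμ hnext hmin]; exact softmax_pos _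
  have hdrift : ∑ a, eta * Q a * (pnext a - pt a) ≤ KLdiv pnext pt + (eta * rmax) ^ 2 / 2 :=
    sum_mul_sub_le_KLdiv_add hnext hpt hptpos fun a => by
      rw [abs_of_nonneg (mul_nonneg heta.le (hQ a).1)]
      exact mul_le_mul_of_nonneg_left (hQ a).2 heta.le
  have hKL : 0 ≤ eta * lam * KLdiv pstar pnext :=
    mul_nonneg (mul_nonneg heta.le hlam.le) (KLdiv_nonneg hpstar hnext hnextpos)
  simp only [mul_assoc, ← mul_sum, mul_sub, sum_sub_distrib] at hdrift ⊢
  linarith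

/-- **Per-step mirror descent inequality.**  Let `q` be a strictly positive distribution on a
finite set `A`, `λ, η > 0`, `Q : A → [0, r_max]`, `pₜ` strictly positive in the simplex, and let
`p_{t+1}` minimize `p ↦ ⟨−Q, p⟩ + λ·KL(p‖q) + (1/η)·KL(p‖pₜ)` over the simplex.  Then for
every `p* ∈ Δ(A)`:
`η·⟨Q, p* − pₜ⟩ + ηλ·KL(pₜ‖q) − ηλ·KL(p*‖q) ≤ (KL(p*‖pₜ) − KL(p*‖p_{t+1})) +
ηλ·(KL(pₜ‖q) − KL(p_{t+1}‖q)) + η²·r_max²/2`. -/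
theorem md_step_inequality {A : Type*} [Fintype A]
    (q : A → ℝ) (hq : q ∈ probSimplex A) (hqpos : ∀ a, 0 < q a)
    (lam eta rmax : ℝ) (hlam : 0 < lam) (heta : 0 < eta)
    (Q : A → ℝ) (hQ : ∀ a, Q a ∈ Set.Icc (0 : ℝ) rmax)
    (pt : A → ℝ) (hpt : pt ∈ probSimplex A) (hptpos : ∀ a, 0 < pt a)
    (pnext : A → ℝ)
    (hnext : pnext ∈ probSimplex A ∧
      ∀ p ∈ probSimplex A, mdObj Q q pt lam eta pnext ≤ mdObj Q q pt lam eta p) :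
    ∀ pstar ∈ probSimplex A,
      eta * (∑ a, Q a * (pstar a - pt a)) + eta * lam * KLdiv pt q
          - eta * lam * KLdiv pstar q
        ≤ (KLdiv pstar pt - KLdiv pstar pnext)
            + eta * lam * (KLdiv pt q - KLdiv pnext q)
            + eta ^ 2 * rmax ^ 2 / 2 :=
  md_step_inequality_general q hqpos lam eta rmax hlam heta Q hQ pt hpt hptpos pnext hnext
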